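/- arXiv:1605.00751 — 12 statements merged into one kernel-verified Lean document; each statement's English description precedes it below -/
import Mathlib

section
/- Let M be a probability measure on a measurable space X, let η, f : X → [0,1] be measurable with f(x) < 1/2 for all x, and let η̄(x) = (1 − 2f(x))·η(x) + f(x). Let ℓ₁, ℓ₋₁ : ℝ → [0,∞) satisfy ℓ₁(v) + ℓ₋₁(v) = C for all v ∈ ℝ, for some constant C ≥ 0, and let L(p,v) = p·ℓ₁(v) + (1−p)·ℓ₋₁(v). Then for any measurable scorer s : X → ℝ for which all the integrals below are finite, ∫ L(η(x), s(x)) dM(x) = ∫ (1 − 2f(x))⁻¹ · L(η̄(x), s(x)) dM(x) − C·∫ f(x)/(1 − 2f(x)) dM(x). In particular, the clean risk equals the instance-weighted corrupted risk, with weight w(x) = (1 − 2f(x))⁻¹, plus a term independent of the scorer s. -/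
open MeasureTheory

section ConstantSumLoss

variable {lpos lneg : ℝ → ℝ} {C v : ℝ}

/-- The conditional risk is affine in `p`, so the noisy mixture `(1 - 2a) p + a` splits off the
constant `a (ℓ₁ v + ℓ₋₁ v) = a C`. -/
theorem condRisk_noisy_eq (hsum : lpos v + lneg v = C) (a p : ℝ) :
    ((1 - 2 * a) * p + a) * lpos v + (1 - ((1 - 2 * a) * p + a)) * lneg v
      = (1 - 2 * a) * (p * lpos v + (1 - p) * lneg v) + a * C := by
  rw [← hsum]
  ring

theorem inv_mul_condRisk_noisy_eq (hsum : lpos v + lneg v = C) {a : ℝ} (ha : 1 - 2 * a ≠ 0)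
    (p : ℝ) :
    (1 - 2 * a)⁻¹ * (((1 - 2 * a) * p + a) * lpos v + (1 - ((1 - 2 * a) * p + a)) * lneg v)
      = p * lpos v + (1 - p) * lneg v + C * (a / (1 - 2 * a)) := by
  rw [condRisk_noisy_eq hsum]
  field_simp

end ConstantSumLoss

theorem clean_risk_eq_weighted_corrupted_risk_general
    {X : Type*} [MeasurableSpace X] (M : Measure X)
    (η f : X → ℝ)
    (hfhalf : ∀ x, f x < 1 / 2)
    (ηbar : X → ℝ) (hηbar : ∀ x, ηbar x = (1 - 2 * f x) * η x + f x)
    (lpos lneg : ℝ → ℝ)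
    (C : ℝ) (hsum : ∀ v, lpos v + lneg v = C)
    (L : ℝ → ℝ → ℝ) (hL : ∀ p v, L p v = p * lpos v + (1 - p) * lneg v)
    (s : X → ℝ)
    (hint₁ : Integrable (fun x => L (η x) (s x)) M)
    (hint₃ : Integrable (fun x => f x / (1 - 2 * f x)) M) :
    ∫ x, L (η x) (s x) ∂M
      = ∫ x, (1 - 2 * f x)⁻¹ * L (ηbar x) (s x) ∂M
        - C * ∫ x, f x / (1 - 2 * f x) ∂M := by
  have weighted_eq : ∀ x, (1 - 2 * f x)⁻¹ * L (ηbar x) (s x)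
      = L (η x) (s x) + C * (f x / (1 - 2 * f x)) := fun x => by
    have hne : 1 - 2 * f x ≠ 0 := by linarith [hfhalf x]
    rw [hηbar, hL, hL]
    exact inv_mul_condRisk_noisy_eq (hsum (s x)) hne (η x)
  simp_rw [weighted_eq]
  rw [integral_add hint₁ (hint₃.const_mul C), integral_const_mul]
  ring

/-- Under instance-dependent noise with flip function `f` (with `f x < 1/2`),
for a loss whose components sum to a constant `C`, the clean risk equals the
instance-weighted corrupted risk (weight `(1 - 2 f x)⁻¹`) plus a term
independent of the scorer. -/
theorem clean_risk_eq_weighted_corrupted_risk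
    {X : Type*} [MeasurableSpace X] (M : Measure X) [IsProbabilityMeasure M]
    (η f : X → ℝ) (hη : Measurable η) (hf : Measurable f)
    (hη01 : ∀ x, η x ∈ Set.Icc (0 : ℝ) 1)
    (hf0 : ∀ x, 0 ≤ f x) (hfhalf : ∀ x, f x < 1 / 2)
    (ηbar : X → ℝ) (hηbar : ∀ x, ηbar x = (1 - 2 * f x) * η x + f x)
    (lpos lneg : ℝ → ℝ) (hlpos : ∀ v, 0 ≤ lpos v) (hlneg : ∀ v, 0 ≤ lneg v)
    (C : ℝ) (hC : 0 ≤ C) (hsum : ∀ v, lpos v + lneg v = C)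
    (L : ℝ → ℝ → ℝ) (hL : ∀ p v, L p v = p * lpos v + (1 - p) * lneg v)
    (s : X → ℝ) (hs : Measurable s)
    (hint₁ : Integrable (fun x => L (η x) (s x)) M)
    (hint₂ : Integrable (fun x => (1 - 2 * f x)⁻¹ * L (ηbar x) (s x)) M)
    (hint₃ : Integrable (fun x => f x / (1 - 2 * f x)) M) :
    ∫ x, L (η x) (s x) ∂M
      = ∫ x, (1 - 2 * f x)⁻¹ * L (ηbar x) (s x) ∂M
        - C * ∫ x, f x / (1 - 2 * f x) ∂M :=
  clean_risk_eq_weighted_corrupted_risk_general M η f hfhalf ηbar hηbar lpos lneg C hsum L hL s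
    hint₁ hint₃
end

section
/- Let ℓ₁, ℓ₋₁ : ℝ → [0,∞) satisfy ℓ₁(v) + ℓ₋₁(v) = C for all v ∈ ℝ, for some constant C ≥ 0, and let L(p,v) = p·ℓ₁(v) + (1−p)·ℓ₋₁(v). Let η : X → [0,1], let f : X → [0,1] satisfy f(x) < 1/2 for all x, and let η̄(x) = (1 − 2f(x))·η(x) + f(x). Then for every x ∈ X and every v* ∈ ℝ: v* minimizes v ↦ L(η(x), v) over ℝ if and only if v* minimizes v ↦ L(η̄(x), v) over ℝ. Consequently the Bayes-optimal scorers for ℓ on the clean and corrupted distributions coincide. -/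
/-! Flipping labels with probability `f` turns the class probability `p` into
`(1 - 2f) p + f`, and since the conditional risk is affine in `p`, the corrupted
risk is `(1 - 2f)` times the clean one plus `f (ℓ₁ v + ℓ₋₁ v)`. When `ℓ₁ + ℓ₋₁`
is constant this is a positive affine transformation (as `f < 1/2`), which has
the same minimizers. -/

def condRisk (lpos lneg : ℝ → ℝ) (p v : ℝ) : ℝ :=
  p * lpos v + (1 - p) * lneg v

theorem condRisk_flip (lpos lneg : ℝ → ℝ) (p f v : ℝ) :
    condRisk lpos lneg ((1 - 2 * f) * p + f) v =
      (1 - 2 * f) * condRisk lpos lneg p v + f * (lpos v + lneg v) := by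
  unfold condRisk
  ring

theorem forall_mul_add_le_iff {ι R : Type*} [Ring R] [LinearOrder R] [IsStrictOrderedRing R]
    (g : ι → R) {a : R} (ha : 0 < a) (b : R) (i : ι) :
    (∀ j, a * g i + b ≤ a * g j + b) ↔ ∀ j, g i ≤ g j := by
  simp only [add_le_add_iff_right, mul_le_mul_iff_right₀ ha]

theorem bayes_optimal_scorers_coincide_general
    {X : Type*}
    (η f : X → ℝ)
    (hfhalf : ∀ x, f x < 1 / 2)
    (ηbar : X → ℝ) (hηbar : ∀ x, ηbar x = (1 - 2 * f x) * η x + f x)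
    (lpos lneg : ℝ → ℝ)
    (C : ℝ) (hsum : ∀ v, lpos v + lneg v = C)
    (L : ℝ → ℝ → ℝ) (hL : ∀ p v, L p v = p * lpos v + (1 - p) * lneg v) :
    ∀ (x : X) (vstar : ℝ),
      (∀ v : ℝ, L (η x) vstar ≤ L (η x) v) ↔
      (∀ v : ℝ, L (ηbar x) vstar ≤ L (ηbar x) v) := by
  intro x vstar
  have hL' : L = condRisk lpos lneg := funext fun p => funext (hL p)
  have hrisk : ∀ v, L (ηbar x) v = (1 - 2 * f x) * L (η x) v + f x * C := by
    intro v
    rw [hηbar, hL', condRisk_flip, hsum]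
  simp only [hrisk]
  exact (forall_mul_add_le_iff (L (η x)) (by linarith [hfhalf x]) _ vstar).symm

/-- For a loss whose components sum to a constant, under instance-dependent
noise the pointwise Bayes-optimal scores on the clean and corrupted
distributions coincide: `v*` minimizes `v ↦ L (η x) v` iff it minimizes
`v ↦ L (η̄ x) v`. -/
theorem bayes_optimal_scorers_coincide
    {X : Type*}
    (η f : X → ℝ)
    (hη01 : ∀ x, η x ∈ Set.Icc (0 : ℝ) 1)
    (hf0 : ∀ x, 0 ≤ f x) (hfhalf : ∀ x, f x < 1 / 2)
    (ηbar : X → ℝ) (hηbar : ∀ x, ηbar x = (1 - 2 * f x) * η x + f x)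
    (lpos lneg : ℝ → ℝ) (hlpos : ∀ v, 0 ≤ lpos v) (hlneg : ∀ v, 0 ≤ lneg v)
    (C : ℝ) (hC : 0 ≤ C) (hsum : ∀ v, lpos v + lneg v = C)
    (L : ℝ → ℝ → ℝ) (hL : ∀ p v, L p v = p * lpos v + (1 - p) * lneg v) :
    ∀ (x : X) (vstar : ℝ),
      (∀ v : ℝ, L (η x) vstar ≤ L (η x) v) ↔
      (∀ v : ℝ, L (ηbar x) vstar ≤ L (ηbar x) v) :=
  bayes_optimal_scorers_coincide_general η f hfhalf ηbar hηbar lpos lneg C hsum L hL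
end

section
/- Let M be a probability measure on a measurable space X, let w, r : X → [0,∞) be measurable, and suppose w(x) ≤ (1 − 2ρ_max)⁻¹ for all x, where ρ_max < 1/2, and r(x) ≤ R for all x, where R < ∞. Then for every α ∈ [0,1], ∫ w(x)·r(x) dM(x) ≤ (1 − 2ρ_max)^{−(1−α)} · R^α · ( ∫ w(x) dM(x) )^α · ( ∫ r(x) dM(x) )^{1−α}. In particular, taking w(x) = (1 − 2f(x))⁻¹ for an instance-dependent flip function f with f(x) ≤ ρ_max, and r(x) the pointwise conditional regret L(η̄(x), s(x)) − L(η̄(x), s*(x)) of a scorer s against a pointwise Bayes-optimal scorer s* for the corrupted class-probability function η̄, this bounds the clean ℓ-regret by (1 − 2ρ_max)^{−(1−α)} · R^α · (∫ w dM)^α · (corrupted ℓ-regret)^{1−α} for losses whose components sum to a constant. -/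
/-!
Split `w r = (w ^ (1 - α) r ^ α) · (w ^ α r ^ (1 - α))`. The first factor is at most
`((1 - 2 ρ_max)⁻¹) ^ (1 - α) R ^ α` pointwise, and Hölder's inequality with the exponents
`α` and `1 - α` bounds the integral of the second by `(∫ w) ^ α (∫ r) ^ (1 - α)`.
-/

open MeasureTheory

theorem Real.mul_le_rpow_mul_rpow_mul_rpow_mul_rpow {a b A B p q : ℝ}
    (ha : 0 ≤ a) (hb : 0 ≤ b) (haA : a ≤ A) (hbB : b ≤ B)
    (hp : 0 ≤ p) (hq : 0 ≤ q) (hpq : p + q = 1) :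
    a * b ≤ A ^ q * B ^ p * (a ^ p * b ^ q) := by
  have hsplit : ∀ c : ℝ, 0 ≤ c → c = c ^ p * c ^ q := fun c hc => by
    rw [← Real.rpow_add' hc (by rw [hpq]; exact one_ne_zero), hpq, Real.rpow_one]
  calc a * b = (a ^ q * b ^ p) * (a ^ p * b ^ q) := by
        conv_lhs => rw [hsplit a ha, hsplit b hb]
        ring
    _ ≤ A ^ q * B ^ p * (a ^ p * b ^ q) := by
        gcongr
        exact Real.rpow_nonneg (ha.trans haA) q

namespace MeasureTheory

variable {X : Type*} [MeasurableSpace X] {μ : Measure X} {f g : X → ℝ} {p q : ℝ}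

theorem Integrable.rpow_mul_rpow_of_nonneg (hf : Integrable f μ) (hg : Integrable g μ)
    (hf0 : 0 ≤ᵐ[μ] f) (hg0 : 0 ≤ᵐ[μ] g) (hp : 0 ≤ p) (hq : 0 ≤ q) (hpq : p + q = 1) :
    Integrable (fun x => f x ^ p * g x ^ q) μ := by
  refine ((hf.const_mul p).add (hg.const_mul q)).mono'
    ((hf.aemeasurable.pow_const p).mul (hg.aemeasurable.pow_const q)).aestronglyMeasurable ?_
  filter_upwards [hf0, hg0] with x hfx hgx
  rw [Real.norm_of_nonneg (mul_nonneg (Real.rpow_nonneg hfx p) (Real.rpow_nonneg hgx q))]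
  exact Real.geom_mean_le_arith_mean2_weighted hp hq hfx hgx hpq

theorem integral_rpow_mul_rpow_le_of_nonneg (hf : Integrable f μ) (hg : Integrable g μ)
    (hf0 : 0 ≤ᵐ[μ] f) (hg0 : 0 ≤ᵐ[μ] g) (hp : 0 ≤ p) (hq : 0 ≤ q) (hpq : p + q = 1) :
    ∫ x, f x ^ p * g x ^ q ∂μ ≤ (∫ x, f x ∂μ) ^ p * (∫ x, g x ∂μ) ^ q := by
  have hfg0 : 0 ≤ᵐ[μ] fun x => f x ^ p * g x ^ q := by
    filter_upwards [hf0, hg0] with x hfx hgx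
    exact mul_nonneg (Real.rpow_nonneg hfx p) (Real.rpow_nonneg hgx q)
  have hofReal : ∀ᵐ x ∂μ, ENNReal.ofReal (f x ^ p * g x ^ q)
      = ENNReal.ofReal (f x) ^ p * ENNReal.ofReal (g x) ^ q := by
    filter_upwards [hf0, hg0] with x hfx hgx
    rw [ENNReal.ofReal_mul (Real.rpow_nonneg hfx p), ENNReal.ofReal_rpow_of_nonneg hfx hp,
      ENNReal.ofReal_rpow_of_nonneg hgx hq]
  rw [integral_eq_lintegral_of_nonneg_ae hf0 hf.1, integral_eq_lintegral_of_nonneg_ae hg0 hg.1,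
    integral_eq_lintegral_of_nonneg_ae hfg0
      (hf.rpow_mul_rpow_of_nonneg hg hf0 hg0 hp hq hpq).1,
    lintegral_congr_ae hofReal, ENNReal.toReal_rpow, ENNReal.toReal_rpow, ← ENNReal.toReal_mul]
  refine ENNReal.toReal_mono ?_ (ENNReal.lintegral_mul_norm_pow_le
    hf.1.aemeasurable.ennreal_ofReal hg.1.aemeasurable.ennreal_ofReal hp hq hpq)
  exact ENNReal.mul_ne_top (ENNReal.rpow_ne_top_of_nonneg hp hf.lintegral_lt_top.ne)
    (ENNReal.rpow_ne_top_of_nonneg hq hg.lintegral_lt_top.ne)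

end MeasureTheory

theorem weighted_regret_interpolation_bound_general
    {X : Type*} [MeasurableSpace X] (M : Measure X) [IsProbabilityMeasure M]
    (w r : X → ℝ)
    (hw0 : ∀ x, 0 ≤ w x) (hr0 : ∀ x, 0 ≤ r x)
    (ρmax : ℝ) (hρ : ρmax < 1 / 2)
    (hwle : ∀ x, w x ≤ (1 - 2 * ρmax)⁻¹)
    (R : ℝ) (hrle : ∀ x, r x ≤ R)
    (hint₁ : Integrable (fun x => w x * r x) M)
    (hint₂ : Integrable w M) (hint₃ : Integrable r M) :
    ∀ α : ℝ, α ∈ Set.Icc (0 : ℝ) 1 →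
      ∫ x, w x * r x ∂M
        ≤ (1 - 2 * ρmax) ^ (-(1 - α)) * R ^ α *
          (∫ x, w x ∂M) ^ α * (∫ x, r x ∂M) ^ (1 - α) := by
  rintro α ⟨hα0, hα1⟩
  have hβ0 : 0 ≤ 1 - α := sub_nonneg.mpr hα1
  have hαβ : α + (1 - α) = 1 := add_sub_cancel α 1
  have hρ' : 0 ≤ 1 - 2 * ρmax := by linarith
  have hR : 0 ≤ R := (hr0 (nonempty_of_isProbabilityMeasure M).some).trans (hrle _)
  have hw0' : 0 ≤ᵐ[M] w := Filter.Eventually.of_forall hw0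
  have hr0' : 0 ≤ᵐ[M] r := Filter.Eventually.of_forall hr0
  set K := ((1 - 2 * ρmax)⁻¹) ^ (1 - α) * R ^ α
  calc ∫ x, w x * r x ∂M ≤ ∫ x, K * (w x ^ α * r x ^ (1 - α)) ∂M :=
        integral_mono hint₁
          ((hint₂.rpow_mul_rpow_of_nonneg hint₃ hw0' hr0' hα0 hβ0 hαβ).const_mul K) fun x =>
          Real.mul_le_rpow_mul_rpow_mul_rpow_mul_rpow (hw0 x) (hr0 x) (hwle x) (hrle x)
            hα0 hβ0 hαβ
    _ = K * ∫ x, w x ^ α * r x ^ (1 - α) ∂M := integral_const_mul K _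
    _ ≤ K * ((∫ x, w x ∂M) ^ α * (∫ x, r x ∂M) ^ (1 - α)) := by
        gcongr
        exact integral_rpow_mul_rpow_le_of_nonneg hint₂ hint₃ hw0' hr0' hα0 hβ0 hαβ
    _ = _ := by
        simp only [K]
        rw [Real.inv_rpow hρ', ← Real.rpow_neg hρ']
        ring

/-- A Hölder-type interpolation bound: if `w ≤ (1 - 2 ρ_max)⁻¹` and `r ≤ R`
pointwise, then for every `α ∈ [0,1]`,
`∫ w r dM ≤ (1 - 2 ρ_max)^{-(1-α)} · R^α · (∫ w dM)^α · (∫ r dM)^{1-α}`. -/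
theorem weighted_regret_interpolation_bound
    {X : Type*} [MeasurableSpace X] (M : Measure X) [IsProbabilityMeasure M]
    (w r : X → ℝ) (hw : Measurable w) (hr : Measurable r)
    (hw0 : ∀ x, 0 ≤ w x) (hr0 : ∀ x, 0 ≤ r x)
    (ρmax : ℝ) (hρ : ρmax < 1 / 2)
    (hwle : ∀ x, w x ≤ (1 - 2 * ρmax)⁻¹)
    (R : ℝ) (hrle : ∀ x, r x ≤ R)
    (hint₁ : Integrable (fun x => w x * r x) M)
    (hint₂ : Integrable w M) (hint₃ : Integrable r M) :
    ∀ α : ℝ, α ∈ Set.Icc (0 : ℝ) 1 →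
      ∫ x, w x * r x ∂M
        ≤ (1 - 2 * ρmax) ^ (-(1 - α)) * R ^ α *
          (∫ x, w x ∂M) ^ α * (∫ x, r x ∂M) ^ (1 - α) :=
  weighted_regret_interpolation_bound_general M w r hw0 hr0 ρmax hρ hwle R hrle hint₁ hint₂ hint₃
end

section
/- Let η : X → [0,1], let ρ₁, ρ₋₁ : X → [0,1] satisfy ρ₁(x) + ρ₋₁(x) < 1 for all x, and let η̄(x) = (1 − ρ₁(x))·η(x) + ρ₋₁(x)·(1 − η(x)). Then for any t ∈ [0,1] and any x ∈ X: η(x) > t if and only if η̄(x) > (1 − ρ₁(x) − ρ₋₁(x))·t + ρ₋₁(x). -/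
theorem corrupted_sub_threshold_eq {R : Type*} [CommRing R] (a b e t : R) :
    (1 - a) * e + b * (1 - e) - ((1 - a - b) * t + b) = (1 - a - b) * (e - t) := by
  ring

theorem threshold_lt_corrupted_iff {R : Type*} [CommRing R] [LinearOrder R]
    [IsStrictOrderedRing R] {a b : R} (hab : a + b < 1) (e t : R) :
    (1 - a - b) * t + b < (1 - a) * e + b * (1 - e) ↔ t < e := by
  rw [← sub_pos, corrupted_sub_threshold_eq, mul_pos_iff_of_pos_left (by linarith), sub_pos]

theorem clean_corrupt_threshold_iln_general
    {X : Type*}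
    (η ρ₁ ρneg : X → ℝ)
    (hadm : ∀ x, ρ₁ x + ρneg x < 1)
    (ηbar : X → ℝ)
    (hηbar : ∀ x, ηbar x = (1 - ρ₁ x) * η x + ρneg x * (1 - η x)) :
    ∀ (t : ℝ), t ∈ Set.Icc (0 : ℝ) 1 →
      ∀ x : X, η x > t ↔ ηbar x > (1 - ρ₁ x - ρneg x) * t + ρneg x := by
  intro t _ x
  rw [gt_iff_lt, gt_iff_lt, hηbar x, threshold_lt_corrupted_iff (hadm x)]

/-- Under admissible instance- and label-dependent noise, clean and corrupted
thresholds are related: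
`η x > t ↔ η̄ x > (1 - ρ₁ x - ρ₋₁ x) · t + ρ₋₁ x`. -/
theorem clean_corrupt_threshold_iln
    {X : Type*}
    (η ρ₁ ρneg : X → ℝ)
    (hη01 : ∀ x, η x ∈ Set.Icc (0 : ℝ) 1)
    (hρ₁ : ∀ x, ρ₁ x ∈ Set.Icc (0 : ℝ) 1) (hρneg : ∀ x, ρneg x ∈ Set.Icc (0 : ℝ) 1)
    (hadm : ∀ x, ρ₁ x + ρneg x < 1)
    (ηbar : X → ℝ)
    (hηbar : ∀ x, ηbar x = (1 - ρ₁ x) * η x + ρneg x * (1 - η x)) :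
    ∀ (t : ℝ), t ∈ Set.Icc (0 : ℝ) 1 →
      ∀ x : X, η x > t ↔ ηbar x > (1 - ρ₁ x - ρneg x) * t + ρneg x :=
  clean_corrupt_threshold_iln_general η ρ₁ ρneg hadm ηbar hηbar
end

section
/- Suppose (f₋₁, f₁, s, η) is BCN⁺-admissible with link u, and let η̄ be the corresponding corrupted class-probability function. Then for all x, x' ∈ X: η(x) < η(x') implies η̄(x) < η̄(x'). Consequently, there exists a nondecreasing function φ : ℝ → ℝ such that η(x) = φ(η̄(x)) for all x ∈ X. -/
/-!
Writing `c = 1 - ρ₁ - ρ₋₁ > 0` for the signal retained at `x`, the corrupted probability is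
`η̄ = 1/2 + c (η - 1/2) + (ρ₋₁ - ρ₁) / 2`. Condition (c) makes the last term nondecreasing along
the score, and condition (b) makes `c` grow with the score where `η > 1/2` and shrink where
`η < 1/2`, so in each regime `c (η - 1/2)` is strictly increasing in `η`; across the threshold
`1/2` its sign already orders the two values. Strict order preservation then lets `η` factor
through `η̄`, and boundedness of `η` allows the factor to be extended monotonically to all of `ℝ`.
-/

open Set

theorem exists_monotone_eq_comp_of_lt_imp_lt {X α β : Type*} [LinearOrder α]
    [ConditionallyCompleteLinearOrder β] {g : X → β} {h : X → α}
    (hg_below : BddBelow (range g)) (hg_above : BddAbove (range g))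
    (hgh : ∀ x x', g x < g x' → h x < h x') :
    ∃ φ : α → β, Monotone φ ∧ ∀ x, g x = φ (h x) := by
  rcases isEmpty_or_nonempty X with hX | hX
  · exact ⟨fun _ => hg_below.some, monotone_const, isEmptyElim⟩
  have hle : ∀ x x', h x ≤ h x' → g x ≤ g x' := fun x x' hxx' =>
    not_lt.1 fun hlt => (hgh x' x hlt).not_ge hxx'
  have h_invFun : ∀ x, h (Function.invFun h (h x)) = h x := fun x =>
    Function.invFun_eq ⟨x, rfl⟩
  set ψ : α → β := fun t => g (Function.invFun h t)
  have hψ : ∀ x, ψ (h x) = g x := fun x =>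
    le_antisymm (hle _ _ (h_invFun x).le) (hle _ _ (h_invFun x).ge)
  have hψ_range : ψ '' range h ⊆ range g := by
    rintro _ ⟨_, ⟨x, rfl⟩, rfl⟩
    exact ⟨x, (hψ x).symm⟩
  have hψ_mono : MonotoneOn ψ (range h) := by
    rintro _ ⟨x, rfl⟩ _ ⟨x', rfl⟩ hxx'
    rw [hψ, hψ]
    exact hle x x' hxx'
  obtain ⟨φ, hφ, hφψ⟩ := hψ_mono.exists_monotone_extension
    (hg_below.mono hψ_range) (hg_above.mono hψ_range)
  exact ⟨φ, hφ, fun x => (hψ x).symm.trans (hφψ ⟨x, rfl⟩)⟩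

/-- The probability of observing label `1` when the clean probability is `p` and labels `1`
and `-1` are flipped with probabilities `ρpos` and `ρneg`. -/
def corruptedProb (ρpos ρneg p : ℝ) : ℝ := (1 - ρpos) * p + ρneg * (1 - p)

theorem corruptedProb_eq (ρpos ρneg p : ℝ) :
    corruptedProb ρpos ρneg p = 1 / 2 + (1 - ρpos - ρneg) * (p - 1 / 2) + (ρneg - ρpos) / 2 := by
  unfold corruptedProb
  ring

theorem corruptedProb_lt_corruptedProb {a b a' b' p p' : ℝ} (hp : p < p')
    (hab : a + b < 1) (hab' : a' + b' < 1) (hdiff : a' - b' ≤ a - b)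
    (hhigh : 1 / 2 < p → 1 / 2 < p' → a' + b' ≤ a + b)
    (hlow : p < 1 / 2 → p' < 1 / 2 → a + b ≤ a' + b') :
    corruptedProb a b p < corruptedProb a' b' p' := by
  rw [corruptedProb_eq, corruptedProb_eq]
  suffices (1 - a - b) * (p - 1 / 2) < (1 - a' - b') * (p' - 1 / 2) by linarith
  rcases lt_or_ge (1 / 2) p with hhalf | hhalf
  · calc (1 - a - b) * (p - 1 / 2) ≤ (1 - a' - b') * (p - 1 / 2) :=
          mul_le_mul_of_nonneg_right (by linarith [hhigh hhalf (hhalf.trans hp)]) (by linarith)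
      _ < (1 - a' - b') * (p' - 1 / 2) := mul_lt_mul_of_pos_left (by linarith) (by linarith)
  rcases lt_or_ge p' (1 / 2) with hhalf' | hhalf'
  · calc (1 - a - b) * (p - 1 / 2) < (1 - a - b) * (p' - 1 / 2) :=
          mul_lt_mul_of_pos_left (by linarith) (by linarith)
      _ ≤ (1 - a' - b') * (p' - 1 / 2) :=
          mul_le_mul_of_nonpos_right (by linarith [hlow (hp.trans hhalf') hhalf']) (by linarith)
  rcases hhalf.lt_or_eq with hhalf | rfl
  · exact (mul_neg_of_pos_of_neg (by linarith) (by linarith)).trans_le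
      (mul_nonneg (by linarith) (by linarith))
  · rw [sub_self, mul_zero]
    exact mul_pos (by linarith) (by linarith)

theorem bcn_plus_order_preservation_general
    {X : Type*}
    (s : X → ℝ) (u : ℝ → ℝ)
    (hu01 : ∀ z, u z ∈ Set.Icc (0 : ℝ) 1)
    (f1 fneg : ℝ → ℝ)
    (hsum : ∀ z, f1 z + fneg z < 1)
    (η : X → ℝ) (hηdef : ∀ x, η x = u (s x))
    (ha : ∀ x x' : X, η x < η x' → s x < s x')
    (hb : ∀ z z' : ℝ, z ≤ z' →
      ((1 / 2 < u z → 1 / 2 < u z' → f1 z' ≤ f1 z ∧ fneg z' ≤ fneg z) ∧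
       (u z < 1 / 2 → u z' < 1 / 2 → f1 z ≤ f1 z' ∧ fneg z ≤ fneg z')))
    (hc : ∀ z z' : ℝ, z ≤ z' → f1 z' - fneg z' ≤ f1 z - fneg z)
    (ηbar : X → ℝ)
    (hηbar : ∀ x, ηbar x = (1 - f1 (s x)) * η x + fneg (s x) * (1 - η x)) :
    (∀ x x' : X, η x < η x' → ηbar x < ηbar x') ∧
    ∃ φ : ℝ → ℝ, Monotone φ ∧ ∀ x, η x = φ (ηbar x) := by
  have hlt : ∀ x x', η x < η x' → ηbar x < ηbar x' := by
    intro x x' hηlt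
    have hss' := (ha x x' hηlt).le
    obtain ⟨hhigh, hlow⟩ := hb _ _ hss'
    rw [hηbar, hηbar]
    refine corruptedProb_lt_corruptedProb hηlt (hsum _) (hsum _) (hc _ _ hss')
      (fun hx hx' => ?_) (fun hx hx' => ?_)
    · obtain ⟨h1, hneg⟩ := hhigh (hηdef x ▸ hx) (hηdef x' ▸ hx')
      linarith
    · obtain ⟨h1, hneg⟩ := hlow (hηdef x ▸ hx) (hηdef x' ▸ hx')
      linarith
  have hη_range : range η ⊆ Icc 0 1 := by
    rintro _ ⟨x, rfl⟩
    exact hηdef x ▸ hu01 (s x)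
  exact ⟨hlt, exists_monotone_eq_comp_of_lt_imp_lt (bddBelow_Icc.mono hη_range)
    (bddAbove_Icc.mono hη_range) hlt⟩

/-- Under BCN⁺-admissible noise, the corrupted class-probability function
preserves the order of the clean one, and hence the clean class-probability
function is a nondecreasing transform of the corrupted one. -/
theorem bcn_plus_order_preservation
    {X : Type*}
    (s : X → ℝ) (u : ℝ → ℝ) (hu_mono : Monotone u)
    (hu01 : ∀ z, u z ∈ Set.Icc (0 : ℝ) 1)
    (f1 fneg : ℝ → ℝ)
    (hf1 : ∀ z, f1 z ∈ Set.Icc (0 : ℝ) 1) (hfneg : ∀ z, fneg z ∈ Set.Icc (0 : ℝ) 1)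
    (hsum : ∀ z, f1 z + fneg z < 1)
    (η : X → ℝ) (hηdef : ∀ x, η x = u (s x))
    (ha : ∀ x x' : X, η x < η x' → s x < s x')
    (hb : ∀ z z' : ℝ, z ≤ z' →
      ((1 / 2 < u z → 1 / 2 < u z' → f1 z' ≤ f1 z ∧ fneg z' ≤ fneg z) ∧
       (u z < 1 / 2 → u z' < 1 / 2 → f1 z ≤ f1 z' ∧ fneg z ≤ fneg z')))
    (hc : ∀ z z' : ℝ, z ≤ z' → f1 z' - fneg z' ≤ f1 z - fneg z)
    (ηbar : X → ℝ)
    (hηbar : ∀ x, ηbar x = (1 - f1 (s x)) * η x + fneg (s x) * (1 - η x)) :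
    (∀ x x' : X, η x < η x' → ηbar x < ηbar x') ∧
    ∃ φ : ℝ → ℝ, Monotone φ ∧ ∀ x, η x = φ (ηbar x) :=
  bcn_plus_order_preservation_general s u hu01 f1 fneg hsum η hηdef ha hb hc ηbar hηbar
end

section
/- Let M be a probability measure on a measurable space X, suppose (f₋₁, f₁, s, η) is BCN⁺-admissible with η, η̄ measurable, and suppose ρ_max = (1/2)·sup_{x∈X} (ρ₁(x) + ρ₋₁(x)) < 1/2, where ρ_y(x) = f_y(s(x)). Let π = ∫ η dM and π̄ = ∫ η̄ dM, and assume π ∈ (0,1) and π̄ ∈ (0,1). For a measurable scorer t : X → ℝ, define 𝕀(a, b) = 1 if a·b < 0, 1/2 if b = 0, and 0 otherwise, and define the ranking regret of t with respect to a class-probability function γ and base rate p as reg(t; γ, p) = (2·p·(1 − p))⁻¹ · ∬ |γ(x) − γ(x')| · 𝕀(γ(x) − γ(x'), t(x) − t(x')) dM(x) dM(x'). Then for any measurable scorer t : X → ℝ, reg(t; η, π) ≤ [ π̄·(1 − π̄) / (π·(1 − π)) ] · (1 − 2ρ_max)⁻¹ · reg(t; η̄, π̄). -/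
/-!
A scorer is charged `|γ x - γ x'|` on every pair it misorders, and `rankInd` only sees the
sign of `γ x - γ x'`. Under BCN⁺-admissible noise the corrupted class-probability function
`η̄` is a strictly increasing "stretch" of `η`: whenever `η x < η x'`,
`η̄ x' - η̄ x ≥ (1 - 2 ρ_max) (η x' - η x)`. Hence the clean integrand is pointwise at most
`(1 - 2 ρ_max)⁻¹` times the corrupted one, and integrating and renormalising by the base
rates gives the bound.
-/

open MeasureTheory

/-- The (mis)ranking indicator: `1` if `a` and `b` have opposite signs,
`1/2` if `b = 0`, and `0` otherwise. -/
noncomputable def rankInd (a b : ℝ) : ℝ :=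
  if a * b < 0 then 1 else if b = 0 then 1 / 2 else 0

/-- The ranking (AUC) regret of a scorer `t` with respect to a
class-probability function `γ`, base rate `p`, and marginal `M`. -/
noncomputable def rankRegret {X : Type*} [MeasurableSpace X] (M : Measure X)
    (γ : X → ℝ) (p : ℝ) (t : X → ℝ) : ℝ :=
  (2 * p * (1 - p))⁻¹ *
    ∫ x, ∫ x', |γ x - γ x'| * rankInd (γ x - γ x') (t x - t x') ∂M ∂M

lemma rankInd_nonneg (a b : ℝ) : 0 ≤ rankInd a b := by
  unfold rankInd; split_ifs <;> norm_num

lemma rankInd_le_one (a b : ℝ) : rankInd a b ≤ 1 := by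
  unfold rankInd; split_ifs <;> norm_num

lemma rankInd_congr_of_mul_pos {a a' : ℝ} (h : 0 < a * a') (b : ℝ) :
    rankInd a b = rankInd a' b := by
  have hsign : a * b < 0 ↔ a' * b < 0 := by
    rw [mul_neg_iff, mul_neg_iff]
    rcases pos_and_pos_or_neg_and_neg_of_mul_pos h with ⟨ha, ha'⟩ | ⟨ha, ha'⟩ <;> grind
  simp only [rankInd, hsign]

lemma Measurable.rankInd {W : Type*} [MeasurableSpace W] {A B : W → ℝ}
    (hA : Measurable A) (hB : Measurable B) :
    Measurable fun w => rankInd (A w) (B w) :=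
  Measurable.ite (measurableSet_lt (hA.mul hB) measurable_const) measurable_const
    (Measurable.ite (measurableSet_eq_fun hB measurable_const) measurable_const measurable_const)

lemma abs_mul_rankInd_le_of_stretch {a a' κ : ℝ} (b : ℝ) (hκ : 0 < κ)
    (hpos : 0 < a → κ * a ≤ a') (hneg : a < 0 → a' ≤ κ * a) :
    |a| * rankInd a b ≤ κ⁻¹ * (|a'| * rankInd a' b) := by
  rcases eq_or_ne a 0 with rfl | ha
  · simpa using mul_nonneg (inv_nonneg.2 hκ.le) (mul_nonneg (abs_nonneg a') (rankInd_nonneg a' b))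
  have hsame : 0 < a * a' ∧ κ * |a| ≤ |a'| := by
    rcases ha.lt_or_gt with h | h
    · have h' : a' < 0 := (hneg h).trans_lt (mul_neg_of_pos_of_neg hκ h)
      refine ⟨mul_pos_of_neg_of_neg h h', ?_⟩
      rw [abs_of_neg h, abs_of_neg h']
      linarith [hneg h]
    · have h' : 0 < a' := (mul_pos hκ h).trans_le (hpos h)
      refine ⟨mul_pos h h', ?_⟩
      rw [abs_of_pos h, abs_of_pos h']
      exact hpos h
  rw [rankInd_congr_of_mul_pos hsame.1, ← mul_assoc]
  exact mul_le_mul_of_nonneg_right ((le_inv_mul_iff₀ hκ).2 hsame.2) (rankInd_nonneg _ _)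

section Regret

variable {X : Type*} [MeasurableSpace X] (M : Measure X) [IsProbabilityMeasure M]

lemma integrable_abs_sub_mul_rankInd {γ : X → ℝ} (t : X → ℝ) (hγ : Measurable γ)
    (ht : Measurable t) (hγ01 : ∀ x, γ x ∈ Set.Icc (0 : ℝ) 1) :
    Integrable (fun q : X × X => |γ q.1 - γ q.2| * rankInd (γ q.1 - γ q.2) (t q.1 - t q.2))
      (M.prod M) := by
  have hdiff {f : X → ℝ} (hf : Measurable f) : Measurable fun q : X × X => f q.1 - f q.2 :=
    (hf.comp measurable_fst).sub (hf.comp measurable_snd)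
  refine Integrable.of_bound
    ((hdiff hγ).abs.mul ((hdiff hγ).rankInd (hdiff ht))).aestronglyMeasurable 1
    (ae_of_all _ fun q => ?_)
  have habs : |γ q.1 - γ q.2| ≤ 1 := by
    rw [abs_le]
    constructor <;> linarith [(hγ01 q.1).1, (hγ01 q.1).2, (hγ01 q.2).1, (hγ01 q.2).2]
  rw [Real.norm_eq_abs, abs_of_nonneg (mul_nonneg (abs_nonneg _) (rankInd_nonneg _ _))]
  exact mul_le_one₀ habs (rankInd_nonneg _ _) (rankInd_le_one _ _)

lemma rankRegret_le_of_stretch {γ γ' : X → ℝ} {κ p p' : ℝ} (t : X → ℝ)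
    (hγ : Measurable γ) (hγ' : Measurable γ') (ht : Measurable t)
    (hγ01 : ∀ x, γ x ∈ Set.Icc (0 : ℝ) 1) (hγ'01 : ∀ x, γ' x ∈ Set.Icc (0 : ℝ) 1)
    (hκ : 0 < κ) (hstretch : ∀ x x', γ x < γ x' → κ * (γ x' - γ x) ≤ γ' x' - γ' x)
    (hp : p ∈ Set.Ioo (0 : ℝ) 1) (hp' : p' ∈ Set.Ioo (0 : ℝ) 1) :
    rankRegret M γ p t ≤ (p' * (1 - p') / (p * (1 - p))) * κ⁻¹ * rankRegret M γ' p' t := by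
  obtain ⟨hp0, hp1⟩ := hp
  obtain ⟨hp'0, hp'1⟩ := hp'
  have hpointwise : ∀ q : X × X,
      |γ q.1 - γ q.2| * rankInd (γ q.1 - γ q.2) (t q.1 - t q.2) ≤
        κ⁻¹ * (|γ' q.1 - γ' q.2| * rankInd (γ' q.1 - γ' q.2) (t q.1 - t q.2)) := fun q =>
    abs_mul_rankInd_le_of_stretch _ hκ
      (fun h => by linarith [hstretch q.2 q.1 (by linarith)])
      (fun h => by linarith [hstretch q.1 q.2 (by linarith)])
  have hintegral :
      (∫ x, ∫ x', |γ x - γ x'| * rankInd (γ x - γ x') (t x - t x') ∂M ∂M) ≤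
        κ⁻¹ * ∫ x, ∫ x', |γ' x - γ' x'| * rankInd (γ' x - γ' x') (t x - t x') ∂M ∂M := by
    have hI := integrable_abs_sub_mul_rankInd M t hγ ht hγ01
    have hI' := integrable_abs_sub_mul_rankInd M t hγ' ht hγ'01
    rw [← integral_prod _ hI, ← integral_prod _ hI', ← integral_const_mul]
    exact integral_mono hI (hI'.const_mul _) hpointwise
  have hnorm : (p' * (1 - p') / (p * (1 - p))) * κ⁻¹ * rankRegret M γ' p' t =
      (2 * p * (1 - p))⁻¹ *
        (κ⁻¹ * ∫ x, ∫ x', |γ' x - γ' x'| * rankInd (γ' x - γ' x') (t x - t x') ∂M ∂M) := by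
    unfold rankRegret
    field_simp [hp0.ne', hp'0.ne', (sub_pos.2 hp1).ne', (sub_pos.2 hp'1).ne']
  rw [hnorm, rankRegret]
  exact mul_le_mul_of_nonneg_left hintegral (inv_nonneg.2 (by nlinarith))

end Regret

lemma corrupt_mem_Icc {p a b : ℝ} (hp : p ∈ Set.Icc (0 : ℝ) 1) (ha : a ∈ Set.Icc (0 : ℝ) 1)
    (hb : b ∈ Set.Icc (0 : ℝ) 1) : (1 - a) * p + b * (1 - p) ∈ Set.Icc (0 : ℝ) 1 := by
  obtain ⟨hp0, hp1⟩ := hp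
  obtain ⟨ha0, ha1⟩ := ha
  obtain ⟨hb0, hb1⟩ := hb
  constructor <;> nlinarith [mul_nonneg ha0 hp0, mul_nonneg (sub_nonneg.2 hb1) (sub_nonneg.2 hp1)]

/-- The difference on the right is `(1 - a' - b') (p' - p)`, and also `(1 - a - b) (p' - p)`,
plus the correction `(a - a' - b + b') w + (b - b') (2 w - 1)` with `w = p`, resp. `w = p'`;
`hsign` makes one of the two corrections nonnegative. -/
lemma mul_sub_le_corrupt_sub_corrupt {p p' a a' b b' c : ℝ} (hp : 0 ≤ p) (hpp' : p ≤ p')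
    (hdiff : a' - b' ≤ a - b) (hc : a + b ≤ c) (hc' : a' + b' ≤ c)
    (hsign : 0 ≤ (b - b') * (2 * p - 1) ∨ 0 ≤ (b - b') * (2 * p' - 1)) :
    (1 - c) * (p' - p) ≤ ((1 - a') * p' + b' * (1 - p')) - ((1 - a) * p + b * (1 - p)) := by
  rcases hsign with h | h
  · nlinarith [mul_nonneg (sub_nonneg.2 hc') (sub_nonneg.2 hpp'),
      mul_nonneg (by linarith : 0 ≤ a - a' - b + b') hp]
  · nlinarith [mul_nonneg (sub_nonneg.2 hc) (sub_nonneg.2 hpp'),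
      mul_nonneg (by linarith : 0 ≤ a - a' - b + b') (hp.trans hpp')]

lemma sub_mul_two_mul_sub_one_nonneg {u fneg : ℝ → ℝ} (hu_mono : Monotone u)
    (hb : ∀ z z', z ≤ z' →
      (1 / 2 < u z → 1 / 2 < u z' → fneg z' ≤ fneg z) ∧
      (u z < 1 / 2 → u z' < 1 / 2 → fneg z ≤ fneg z'))
    {z z' : ℝ} (hzz' : z ≤ z') :
    0 ≤ (fneg z - fneg z') * (2 * u z - 1) ∨ 0 ≤ (fneg z - fneg z') * (2 * u z' - 1) := by
  by_contra! h
  have hu := hu_mono hzz'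
  rcases lt_or_ge (fneg z') (fneg z) with hf | hf
  · have hlow : u z' < 1 / 2 := by nlinarith [h.2]
    linarith [(hb z z' hzz').2 (by linarith) hlow]
  · have hhigh : 1 / 2 < u z := by nlinarith [h.1]
    have hf' := (hb z z' hzz').1 hhigh (by linarith)
    nlinarith [h.1]

theorem bcn_plus_auc_regret_bound_general
    {X : Type*} [MeasurableSpace X] (M : Measure X) [IsProbabilityMeasure M]
    (s : X → ℝ) (u : ℝ → ℝ) (hu_mono : Monotone u)
    (hu01 : ∀ z, u z ∈ Set.Icc (0 : ℝ) 1)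
    (f1 fneg : ℝ → ℝ)
    (hf1 : ∀ z, f1 z ∈ Set.Icc (0 : ℝ) 1) (hfneg : ∀ z, fneg z ∈ Set.Icc (0 : ℝ) 1)
    (hsum : ∀ z, f1 z + fneg z < 1)
    (η : X → ℝ) (hηdef : ∀ x, η x = u (s x)) (hηmeas : Measurable η)
    (ha : ∀ x x' : X, η x < η x' → s x < s x')
    (hb : ∀ z z' : ℝ, z ≤ z' →
      ((1 / 2 < u z → 1 / 2 < u z' → f1 z' ≤ f1 z ∧ fneg z' ≤ fneg z) ∧
       (u z < 1 / 2 → u z' < 1 / 2 → f1 z ≤ f1 z' ∧ fneg z ≤ fneg z')))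
    (hc : ∀ z z' : ℝ, z ≤ z' → f1 z' - fneg z' ≤ f1 z - fneg z)
    (ηbar : X → ℝ)
    (hηbar : ∀ x, ηbar x = (1 - f1 (s x)) * η x + fneg (s x) * (1 - η x))
    (hηbarmeas : Measurable ηbar)
    (ρmax : ℝ) (hρdef : ρmax = (1 / 2) * ⨆ x : X, (f1 (s x) + fneg (s x)))
    (hρlt : ρmax < 1 / 2)
    (π : ℝ) (hπ : π ∈ Set.Ioo (0 : ℝ) 1)
    (πbar : ℝ) (hπbar : πbar ∈ Set.Ioo (0 : ℝ) 1)
    (t : X → ℝ) (ht : Measurable t) :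
    rankRegret M η π t
      ≤ (πbar * (1 - πbar) / (π * (1 - π))) * (1 - 2 * ρmax)⁻¹ *
        rankRegret M ηbar πbar t := by
  have hbound (x : X) : f1 (s x) + fneg (s x) ≤ 2 * ρmax := by
    have hbdd : BddAbove (Set.range fun x : X => f1 (s x) + fneg (s x)) :=
      ⟨1, by rintro _ ⟨y, rfl⟩; exact (hsum (s y)).le⟩
    linarith [le_ciSup hbdd x]
  have hη01 (x : X) : η x ∈ Set.Icc (0 : ℝ) 1 := hηdef x ▸ hu01 _
  have hηbar01 (x : X) : ηbar x ∈ Set.Icc (0 : ℝ) 1 :=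
    hηbar x ▸ corrupt_mem_Icc (hη01 x) (hf1 _) (hfneg _)
  have hbneg (z z' : ℝ) (h : z ≤ z') :
      (1 / 2 < u z → 1 / 2 < u z' → fneg z' ≤ fneg z) ∧
      (u z < 1 / 2 → u z' < 1 / 2 → fneg z ≤ fneg z') :=
    ⟨fun h1 h2 => ((hb z z' h).1 h1 h2).2, fun h1 h2 => ((hb z z' h).2 h1 h2).2⟩
  have hstretch (x x' : X) (hlt : η x < η x') :
      (1 - 2 * ρmax) * (η x' - η x) ≤ ηbar x' - ηbar x := by
    have hs := (ha x x' hlt).le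
    rw [hηbar x, hηbar x', hηdef x, hηdef x']
    exact mul_sub_le_corrupt_sub_corrupt (hu01 _).1 (hu_mono hs) (by linarith [hc _ _ hs])
      (hbound x) (hbound x') (sub_mul_two_mul_sub_one_nonneg hu_mono hbneg hs)
  exact rankRegret_le_of_stretch M t hηmeas hηbarmeas ht hη01 hηbar01 (by linarith) hstretch
    hπ hπbar

/-- Under BCN⁺-admissible noise with total noise bound `ρ_max < 1/2`, the
clean AUC (ranking) regret of any scorer is bounded by
`(π̄(1-π̄)/(π(1-π))) · (1 - 2 ρ_max)⁻¹` times its corrupted AUC regret. -/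
theorem bcn_plus_auc_regret_bound
    {X : Type*} [MeasurableSpace X] (M : Measure X) [IsProbabilityMeasure M]
    (s : X → ℝ) (u : ℝ → ℝ) (hu_mono : Monotone u)
    (hu01 : ∀ z, u z ∈ Set.Icc (0 : ℝ) 1)
    (f1 fneg : ℝ → ℝ)
    (hf1 : ∀ z, f1 z ∈ Set.Icc (0 : ℝ) 1) (hfneg : ∀ z, fneg z ∈ Set.Icc (0 : ℝ) 1)
    (hsum : ∀ z, f1 z + fneg z < 1)
    (η : X → ℝ) (hηdef : ∀ x, η x = u (s x)) (hηmeas : Measurable η)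
    (ha : ∀ x x' : X, η x < η x' → s x < s x')
    (hb : ∀ z z' : ℝ, z ≤ z' →
      ((1 / 2 < u z → 1 / 2 < u z' → f1 z' ≤ f1 z ∧ fneg z' ≤ fneg z) ∧
       (u z < 1 / 2 → u z' < 1 / 2 → f1 z ≤ f1 z' ∧ fneg z ≤ fneg z')))
    (hc : ∀ z z' : ℝ, z ≤ z' → f1 z' - fneg z' ≤ f1 z - fneg z)
    (ηbar : X → ℝ)
    (hηbar : ∀ x, ηbar x = (1 - f1 (s x)) * η x + fneg (s x) * (1 - η x))
    (hηbarmeas : Measurable ηbar)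
    (ρmax : ℝ) (hρdef : ρmax = (1 / 2) * ⨆ x : X, (f1 (s x) + fneg (s x)))
    (hρlt : ρmax < 1 / 2)
    (π : ℝ) (hπdef : π = ∫ x, η x ∂M) (hπ : π ∈ Set.Ioo (0 : ℝ) 1)
    (πbar : ℝ) (hπbardef : πbar = ∫ x, ηbar x ∂M) (hπbar : πbar ∈ Set.Ioo (0 : ℝ) 1)
    (t : X → ℝ) (ht : Measurable t) :
    rankRegret M η π t
      ≤ (πbar * (1 - πbar) / (π * (1 - π))) * (1 - 2 * ρmax)⁻¹ *
        rankRegret M ηbar πbar t :=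
  bcn_plus_auc_regret_bound_general M s u hu_mono hu01 f1 fneg hf1 hfneg hsum η hηdef hηmeas ha hb
    hc ηbar hηbar hηbarmeas ρmax hρdef hρlt π hπ πbar hπbar t ht
end

section
/- Let M be a probability measure on a measurable space X, let η : X → [0,1] be measurable, let ρ₁, ρ₋₁ : X → [0,1] be measurable with ρ₁(x) + ρ₋₁(x) < 1 for all x, and let η̄(x) = (1 − ρ₁(x))·η(x) + ρ₋₁(x)·(1 − η(x)). Let ℓ₁, ℓ₋₁ : ℝ → [0,∞) be any loss and s : X → ℝ any measurable scorer. Define w(x) = (1 − ρ₁(x) − ρ₋₁(x))⁻¹ and the generalized losses ℓ̃₁(s, x) = w(x)·( (1 − ρ₋₁(x))·ℓ₁(s(x)) − ρ₁(x)·ℓ₋₁(s(x)) ) and ℓ̃₋₁(s, x) = w(x)·( −ρ₋₁(x)·ℓ₁(s(x)) + (1 − ρ₁(x))·ℓ₋₁(s(x)) ). Then, assuming all the integrals below are finite, ∫ [ η(x)·ℓ₁(s(x)) + (1 − η(x))·ℓ₋₁(s(x)) ] dM(x) = ∫ [ η̄(x)·ℓ̃₁(s, x) + (1 − η̄(x))·ℓ̃₋₁(s,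 x) ] dM(x); that is, the clean ℓ-risk equals the corrupted expectation of the generalized loss. -/
/-!
The generalized loss vector `(ℓ̃₁, ℓ̃₋₁)` is the inverse of the label-flip matrix
`[[1 - ρ₁, ρ₁], [ρ₋₁, 1 - ρ₋₁]]` applied to `(ℓ₁, ℓ₋₁)`, so averaging it over the corrupted label
undoes the flips pointwise: the two integrands already agree at every `x`.
-/

open MeasureTheory

theorem corrupted_average_generalized_loss_eq {K : Type*} [Field K] {ρ₁ ρneg : K}
    (h : 1 - ρ₁ - ρneg ≠ 0) (η a b : K) :
    ((1 - ρ₁) * η + ρneg * (1 - η)) * ((1 - ρ₁ - ρneg)⁻¹ * ((1 - ρneg) * a - ρ₁ * b))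
      + (1 - ((1 - ρ₁) * η + ρneg * (1 - η)))
        * ((1 - ρ₁ - ρneg)⁻¹ * (-ρneg * a + (1 - ρ₁) * b))
      = η * a + (1 - η) * b := by
  field_simp
  ring

theorem clean_risk_eq_corrupted_generalized_loss_general
    {X : Type*} [MeasurableSpace X] (M : Measure X)
    (η ρ₁ ρneg : X → ℝ)
    (hadm : ∀ x, ρ₁ x + ρneg x < 1)
    (ηbar : X → ℝ)
    (hηbar : ∀ x, ηbar x = (1 - ρ₁ x) * η x + ρneg x * (1 - η x))
    (lpos lneg : ℝ → ℝ)
    (s : X → ℝ)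
    (w : X → ℝ) (hw : ∀ x, w x = (1 - ρ₁ x - ρneg x)⁻¹)
    (ltilpos ltilneg : (X → ℝ) → X → ℝ)
    (hltilpos : ∀ x, ltilpos s x
      = w x * ((1 - ρneg x) * lpos (s x) - ρ₁ x * lneg (s x)))
    (hltilneg : ∀ x, ltilneg s x
      = w x * (-(ρneg x) * lpos (s x) + (1 - ρ₁ x) * lneg (s x))) :
    ∫ x, (η x * lpos (s x) + (1 - η x) * lneg (s x)) ∂M
      = ∫ x, (ηbar x * ltilpos s x + (1 - ηbar x) * ltilneg s x) ∂M := by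
  congr 1
  funext x
  have hdet : 1 - ρ₁ x - ρneg x ≠ 0 := by linarith [hadm x]
  rw [hηbar, hltilpos, hltilneg, hw,
    corrupted_average_generalized_loss_eq hdet]

/-- Method of unbiased estimators for instance- and label-dependent noise:
the clean `ℓ`-risk equals the corrupted expectation of the generalized loss. -/
theorem clean_risk_eq_corrupted_generalized_loss
    {X : Type*} [MeasurableSpace X] (M : Measure X) [IsProbabilityMeasure M]
    (η ρ₁ ρneg : X → ℝ) (hη : Measurable η)
    (hρ₁m : Measurable ρ₁) (hρnegm : Measurable ρneg)
    (hη01 : ∀ x, η x ∈ Set.Icc (0 : ℝ) 1)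
    (hρ₁ : ∀ x, ρ₁ x ∈ Set.Icc (0 : ℝ) 1) (hρneg : ∀ x, ρneg x ∈ Set.Icc (0 : ℝ) 1)
    (hadm : ∀ x, ρ₁ x + ρneg x < 1)
    (ηbar : X → ℝ)
    (hηbar : ∀ x, ηbar x = (1 - ρ₁ x) * η x + ρneg x * (1 - η x))
    (lpos lneg : ℝ → ℝ) (hlpos : ∀ v, 0 ≤ lpos v) (hlneg : ∀ v, 0 ≤ lneg v)
    (s : X → ℝ) (hs : Measurable s)
    (w : X → ℝ) (hw : ∀ x, w x = (1 - ρ₁ x - ρneg x)⁻¹)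
    (ltilpos ltilneg : (X → ℝ) → X → ℝ)
    (hltilpos : ∀ x, ltilpos s x
      = w x * ((1 - ρneg x) * lpos (s x) - ρ₁ x * lneg (s x)))
    (hltilneg : ∀ x, ltilneg s x
      = w x * (-(ρneg x) * lpos (s x) + (1 - ρ₁ x) * lneg (s x)))
    (hint₁ : Integrable (fun x => η x * lpos (s x) + (1 - η x) * lneg (s x)) M)
    (hint₂ : Integrable
      (fun x => ηbar x * ltilpos s x + (1 - ηbar x) * ltilneg s x) M) :
    ∫ x, (η x * lpos (s x) + (1 - η x) * lneg (s x)) ∂M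
      = ∫ x, (ηbar x * ltilpos s x + (1 - ηbar x) * ltilneg s x) ∂M :=
  clean_risk_eq_corrupted_generalized_loss_general M η ρ₁ ρneg hadm ηbar hηbar lpos lneg s w hw
    ltilpos ltilneg hltilpos hltilneg
end

section
/- Suppose (f₋₁, f₁, s, η) is BCN⁺-admissible with link u, and let η̄ be the corresponding corrupted class-probability function. Then for all x, x' ∈ X, s(x) ≤ s(x') implies η̄(x) ≤ η̄(x'). Consequently, there exists a nondecreasing function ū : ℝ → ℝ such that η̄(x) = ū(s(x)) for all x ∈ X. -/
/-!
Writing `d = f₁ - f₋₁` and `t = f₁ + f₋₁`, the corrupted link is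
`ū = (1 - d) / 2 + (u - 1/2) (1 - t)`. The first summand is nondecreasing by (c). In the
second, `1 - t > 0`, and by (b) it increases with `z` where `u - 1/2 > 0` and decreases where
`u - 1/2 < 0`, so the product is nondecreasing on each side of the threshold; across the
threshold it changes sign from `≤ 0` to `≥ 0`.
-/

theorem mul_le_mul_of_sign_split {a a' b b' : ℝ} (ha : a ≤ a') (hb : 0 ≤ b) (hb' : 0 ≤ b')
    (hpos : 0 < a → b ≤ b') (hneg : a' < 0 → b' ≤ b) : a * b ≤ a' * b' := by
  rcases lt_or_ge 0 a with h | h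
  · exact mul_le_mul ha (hpos h) hb (h.le.trans ha)
  rcases lt_or_ge a' 0 with h' | h'
  · calc a * b ≤ a * b' := mul_le_mul_of_nonpos_left (hneg h') h
      _ ≤ a' * b' := mul_le_mul_of_nonneg_right ha hb'
  · exact (mul_nonpos_of_nonpos_of_nonneg h hb).trans (mul_nonneg h' hb')

section CorruptedLink

variable (f1 fneg u : ℝ → ℝ)

noncomputable def corruptedLink (z : ℝ) : ℝ :=
  (1 - f1 z) * u z + fneg z * (1 - u z)

theorem corruptedLink_eq (z : ℝ) :
    corruptedLink f1 fneg u z =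
      (1 - (f1 z - fneg z)) / 2 + (u z - 1 / 2) * (1 - (f1 z + fneg z)) := by
  unfold corruptedLink
  ring

variable {f1 fneg u}

theorem monotone_corruptedLink (hu : Monotone u) (hsum : ∀ z, f1 z + fneg z < 1)
    (hb : ∀ z z' : ℝ, z ≤ z' →
      ((1 / 2 < u z → 1 / 2 < u z' → f1 z' ≤ f1 z ∧ fneg z' ≤ fneg z) ∧
       (u z < 1 / 2 → u z' < 1 / 2 → f1 z ≤ f1 z' ∧ fneg z ≤ fneg z')))
    (hc : ∀ z z' : ℝ, z ≤ z' → f1 z' - fneg z' ≤ f1 z - fneg z) :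
    Monotone (corruptedLink f1 fneg u) := by
  intro z z' hz
  rw [corruptedLink_eq, corruptedLink_eq]
  have hu' := hu hz
  refine add_le_add (by linarith [hc z z' hz]) (mul_le_mul_of_sign_split ?_ ?_ ?_ ?_ ?_)
  · linarith
  · linarith [hsum z]
  · linarith [hsum z']
  · intro h
    obtain ⟨hf1, hfneg⟩ := (hb z z' hz).1 (by linarith) (by linarith)
    linarith
  · intro h
    obtain ⟨hf1, hfneg⟩ := (hb z z' hz).2 (by linarith) (by linarith)
    linarith

end CorruptedLink

theorem bcn_plus_eta_bar_score_preserving_general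
    {X : Type*}
    (s : X → ℝ) (u : ℝ → ℝ) (hu_mono : Monotone u)
    (f1 fneg : ℝ → ℝ)
    (hsum : ∀ z, f1 z + fneg z < 1)
    (η : X → ℝ) (hηdef : ∀ x, η x = u (s x))
    (hb : ∀ z z' : ℝ, z ≤ z' →
      ((1 / 2 < u z → 1 / 2 < u z' → f1 z' ≤ f1 z ∧ fneg z' ≤ fneg z) ∧
       (u z < 1 / 2 → u z' < 1 / 2 → f1 z ≤ f1 z' ∧ fneg z ≤ fneg z')))
    (hc : ∀ z z' : ℝ, z ≤ z' → f1 z' - fneg z' ≤ f1 z - fneg z)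
    (ηbar : X → ℝ)
    (hηbar : ∀ x, ηbar x = (1 - f1 (s x)) * η x + fneg (s x) * (1 - η x)) :
    (∀ x x' : X, s x ≤ s x' → ηbar x ≤ ηbar x') ∧
    ∃ ubar : ℝ → ℝ, Monotone ubar ∧ ∀ x, ηbar x = ubar (s x) := by
  have hfactor : ∀ x, ηbar x = corruptedLink f1 fneg u (s x) := fun x => by
    rw [hηbar, hηdef]; rfl
  have hmono := monotone_corruptedLink hu_mono hsum hb hc
  refine ⟨fun x x' h => ?_, _, hmono, hfactor⟩
  rw [hfactor, hfactor]
  exact hmono h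

/-- Under BCN⁺-admissible noise, the corrupted class-probability function is
order preserving for the underlying scores, and hence factors through the
score via a nondecreasing link. -/
theorem bcn_plus_eta_bar_score_preserving
    {X : Type*}
    (s : X → ℝ) (u : ℝ → ℝ) (hu_mono : Monotone u)
    (hu01 : ∀ z, u z ∈ Set.Icc (0 : ℝ) 1)
    (f1 fneg : ℝ → ℝ)
    (hf1 : ∀ z, f1 z ∈ Set.Icc (0 : ℝ) 1) (hfneg : ∀ z, fneg z ∈ Set.Icc (0 : ℝ) 1)
    (hsum : ∀ z, f1 z + fneg z < 1)
    (η : X → ℝ) (hηdef : ∀ x, η x = u (s x))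
    (ha : ∀ x x' : X, η x < η x' → s x < s x')
    (hb : ∀ z z' : ℝ, z ≤ z' →
      ((1 / 2 < u z → 1 / 2 < u z' → f1 z' ≤ f1 z ∧ fneg z' ≤ fneg z) ∧
       (u z < 1 / 2 → u z' < 1 / 2 → f1 z ≤ f1 z' ∧ fneg z ≤ fneg z')))
    (hc : ∀ z z' : ℝ, z ≤ z' → f1 z' - fneg z' ≤ f1 z - fneg z)
    (ηbar : X → ℝ)
    (hηbar : ∀ x, ηbar x = (1 - f1 (s x)) * η x + fneg (s x) * (1 - η x)) :
    (∀ x x' : X, s x ≤ s x' → ηbar x ≤ ηbar x') ∧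
    ∃ ubar : ℝ → ℝ, Monotone ubar ∧ ∀ x, ηbar x = ubar (s x) :=
  bcn_plus_eta_bar_score_preserving_general s u hu_mono f1 fneg hsum η hηdef hb hc ηbar hηbar
end

section
/- Let M be a probability measure on a measurable space X, let η : X → [0,1] be measurable, and let f : X → [0,1] be measurable with f(x) ≤ ρ_max for all x, where ρ_max < 1/2. Let η̄(x) = (1 − 2f(x))·η(x) + f(x). Then for any measurable scorer s : X → ℝ, ∫ |η(x) − 1/2| · 𝟙[ (2η(x) − 1)·s(x) < 0 ] dM(x) ≤ (1 − 2ρ_max)⁻¹ · ∫ |η̄(x) − 1/2| · 𝟙[ (2η̄(x) − 1)·s(x) < 0 ] dM(x); that is, the 0-1 loss regret of s on the clean distribution is at most (1 − 2ρ_max)⁻¹ times its 0-1 loss regret on the corrupted distribution. -/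
/-!
Under instance-dependent noise the corrupted class probability is the clean one shrunk towards `1/2`:
`η̄ - 1/2 = (1 - 2f)(η - 1/2)` with `1 - 2f > 0`. Hence the noise never changes the Bayes-optimal
sign, and the pointwise corrupted regret is the clean one scaled by `1 - 2f ∈ [1 - 2ρ_max, 1]`.
Integrating this needs no integrability assumption: the corrupted regret is dominated by the clean
one, and a non-integrable clean regret has Bochner integral `0`.
-/

open MeasureTheory

noncomputable def zeroOneRegret (p t : ℝ) : ℝ :=
  |p - 1 / 2| * if (2 * p - 1) * t < 0 then 1 else 0

lemma zeroOneRegret_nonneg (p t : ℝ) : 0 ≤ zeroOneRegret p t := by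
  unfold zeroOneRegret
  positivity

lemma zeroOneRegret_shrink {a : ℝ} (ha : 0 < a) (p t : ℝ) :
    zeroOneRegret (a * (p - 1 / 2) + 1 / 2) t = a * zeroOneRegret p t := by
  have hsign : (2 * (a * (p - 1 / 2) + 1 / 2) - 1) * t = a * ((2 * p - 1) * t) := by ring
  have habs : |a * (p - 1 / 2) + 1 / 2 - 1 / 2| = a * |p - 1 / 2| := by
    rw [add_sub_cancel_right, abs_mul, abs_of_pos ha]
  unfold zeroOneRegret
  rw [hsign, habs, mul_assoc]
  simp only [mul_neg_iff, ha, ha.not_gt, true_and, false_and, or_false]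

lemma integral_le_inv_mul_integral_mul {X : Type*} [MeasurableSpace X] {μ : Measure X}
    {g w : X → ℝ} {c : ℝ} (hc : 0 < c) (hw : AEStronglyMeasurable w μ)
    (hcw : ∀ᵐ x ∂μ, c ≤ w x) (hw1 : ∀ᵐ x ∂μ, w x ≤ 1) (hg : ∀ᵐ x ∂μ, 0 ≤ g x) :
    ∫ x, g x ∂μ ≤ c⁻¹ * ∫ x, w x * g x ∂μ := by
  by_cases hgi : Integrable g μ
  swap
  · rw [integral_undef hgi]
    exact mul_nonneg (inv_nonneg.2 hc.le)
      (integral_nonneg_of_ae (by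
        filter_upwards [hcw, hg] with x hcx hgx
        exact mul_nonneg (hc.le.trans hcx) hgx))
  have hwgi : Integrable (fun x => w x * g x) μ := by
    refine hgi.mono' (hw.mul hgi.aestronglyMeasurable) ?_
    filter_upwards [hcw, hw1, hg] with x hcx hx1 hgx
    rw [norm_mul, Real.norm_of_nonneg (hc.le.trans hcx), Real.norm_of_nonneg hgx]
    exact mul_le_of_le_one_left hgx hx1
  rw [← integral_const_mul]
  refine integral_mono_ae hgi (hwgi.const_mul _) ?_
  filter_upwards [hcw, hg] with x hcx hgx
  rw [le_inv_mul_iff₀ hc]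
  exact mul_le_mul_of_nonneg_right hcx hgx

theorem zero_one_regret_bound_idn_general
    {X : Type*} [MeasurableSpace X] (M : Measure X)
    (η f : X → ℝ) (hf : Measurable f)
    (hf0 : ∀ x, 0 ≤ f x)
    (ρmax : ℝ) (hfρ : ∀ x, f x ≤ ρmax) (hρ : ρmax < 1 / 2)
    (ηbar : X → ℝ) (hηbar : ∀ x, ηbar x = (1 - 2 * f x) * η x + f x)
    (s : X → ℝ) :
    ∫ x, |η x - 1 / 2| * (if (2 * η x - 1) * s x < 0 then (1 : ℝ) else 0) ∂M
      ≤ (1 - 2 * ρmax)⁻¹ *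
        ∫ x, |ηbar x - 1 / 2| *
          (if (2 * ηbar x - 1) * s x < 0 then (1 : ℝ) else 0) ∂M := by
  change ∫ x, zeroOneRegret (η x) (s x) ∂M
    ≤ (1 - 2 * ρmax)⁻¹ * ∫ x, zeroOneRegret (ηbar x) (s x) ∂M
  have hcorrupted x : zeroOneRegret (ηbar x) (s x) = (1 - 2 * f x) * zeroOneRegret (η x) (s x) := by
    have hpos : 0 < 1 - 2 * f x := by linarith [hfρ x]
    rw [← zeroOneRegret_shrink hpos, hηbar]
    congr 1
    ring
  simp_rw [hcorrupted]
  exact integral_le_inv_mul_integral_mul (by linarith)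
    ((measurable_const.sub (hf.const_mul 2)).aestronglyMeasurable)
    (.of_forall fun x => by linarith [hfρ x]) (.of_forall fun x => by linarith [hf0 x])
    (.of_forall fun x => zeroOneRegret_nonneg _ _)

/-- Under instance-dependent noise bounded by `ρ_max < 1/2`, the 0-1 loss
regret of any scorer on the clean distribution is at most `(1 - 2 ρ_max)⁻¹`
times its 0-1 loss regret on the corrupted distribution. -/
theorem zero_one_regret_bound_idn
    {X : Type*} [MeasurableSpace X] (M : Measure X) [IsProbabilityMeasure M]
    (η f : X → ℝ) (hη : Measurable η) (hf : Measurable f)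
    (hη01 : ∀ x, η x ∈ Set.Icc (0 : ℝ) 1)
    (hf0 : ∀ x, 0 ≤ f x)
    (ρmax : ℝ) (hfρ : ∀ x, f x ≤ ρmax) (hρ : ρmax < 1 / 2)
    (ηbar : X → ℝ) (hηbar : ∀ x, ηbar x = (1 - 2 * f x) * η x + f x)
    (s : X → ℝ) (hs : Measurable s) :
    ∫ x, |η x - 1 / 2| * (if (2 * η x - 1) * s x < 0 then (1 : ℝ) else 0) ∂M
      ≤ (1 - 2 * ρmax)⁻¹ *
        ∫ x, |ηbar x - 1 / 2| *
          (if (2 * ηbar x - 1) * s x < 0 then (1 : ℝ) else 0) ∂M :=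
  zero_one_regret_bound_idn_general M η f hf hf0 ρmax hfρ hρ ηbar hηbar s
end

section
/- Let η : X → [0,1], let f : X → [0,1] satisfy f(x) < 1/2 for all x, and let η̄(x) = (1 − 2f(x))·η(x) + f(x). Then for all x ∈ X, η(x) > 1/2 if and only if η̄(x) > 1/2. Consequently, the Bayes-optimal classifier for 0-1 loss, x ↦ sign(2η(x) − 1), is unchanged by the corruption. -/
/-! The corruption is an affine contraction of `η` towards `1/2`:
`2 η̄ - 1 = (1 - 2 f) (2 η - 1)` with `1 - 2 f > 0`, so `2 η̄ - 1` and `2 η - 1` have the same sign. -/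

theorem Real.sign_mul_of_pos {a : ℝ} (ha : 0 < a) (b : ℝ) :
    Real.sign (a * b) = Real.sign b := by
  rcases lt_trichotomy b 0 with hb | rfl | hb
  · rw [Real.sign_of_neg (mul_neg_of_pos_of_neg ha hb), Real.sign_of_neg hb]
  · rw [mul_zero]
  · rw [Real.sign_of_pos (mul_pos ha hb), Real.sign_of_pos hb]

section InstanceDependentNoise

variable {f η : ℝ}

theorem two_mul_idn_sub_one (f η : ℝ) :
    2 * ((1 - 2 * f) * η + f) - 1 = (1 - 2 * f) * (2 * η - 1) := by
  ring

theorem half_lt_idn_iff (hf : f < 1 / 2) : 1 / 2 < (1 - 2 * f) * η + f ↔ 1 / 2 < η := by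
  have hcontr : 0 < 1 - 2 * f := by linarith
  calc 1 / 2 < (1 - 2 * f) * η + f
      ↔ 0 < 2 * ((1 - 2 * f) * η + f) - 1 := by constructor <;> intro h <;> linarith
    _ ↔ 0 < 2 * η - 1 := by rw [two_mul_idn_sub_one, mul_pos_iff_of_pos_left hcontr]
    _ ↔ 1 / 2 < η := by constructor <;> intro h <;> linarith

theorem sign_two_mul_idn_sub_one (hf : f < 1 / 2) :
    Real.sign (2 * ((1 - 2 * f) * η + f) - 1) = Real.sign (2 * η - 1) := by
  rw [two_mul_idn_sub_one, Real.sign_mul_of_pos (by linarith)]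

end InstanceDependentNoise

theorem bayes_classifier_unchanged_idn_general
    {X : Type*}
    (η f : X → ℝ)
    (hfhalf : ∀ x, f x < 1 / 2)
    (ηbar : X → ℝ) (hηbar : ∀ x, ηbar x = (1 - 2 * f x) * η x + f x) :
    (∀ x : X, η x > 1 / 2 ↔ ηbar x > 1 / 2) ∧
    (∀ x : X, Real.sign (2 * η x - 1) = Real.sign (2 * ηbar x - 1)) := by
  refine ⟨fun x => ?_, fun x => ?_⟩ <;> rw [hηbar x]
  · exact (half_lt_idn_iff (hfhalf x)).symm
  · exact (sign_two_mul_idn_sub_one (hfhalf x)).symm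

/-- Under instance-dependent noise with `f x < 1/2`, the clean and corrupted
class-probability functions lie on the same side of `1/2`; consequently the
Bayes-optimal 0-1 classifier `x ↦ sign(2 η x - 1)` is unchanged. -/
theorem bayes_classifier_unchanged_idn
    {X : Type*}
    (η f : X → ℝ)
    (hη01 : ∀ x, η x ∈ Set.Icc (0 : ℝ) 1)
    (hf0 : ∀ x, 0 ≤ f x) (hfhalf : ∀ x, f x < 1 / 2)
    (ηbar : X → ℝ) (hηbar : ∀ x, ηbar x = (1 - 2 * f x) * η x + f x) :
    (∀ x : X, η x > 1 / 2 ↔ ηbar x > 1 / 2) ∧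
    (∀ x : X, Real.sign (2 * η x - 1) = Real.sign (2 * ηbar x - 1)) :=
  bayes_classifier_unchanged_idn_general η f hfhalf ηbar hηbar
end

section
/- Let g : [0,1] → [0,1/2) be a function that is nondecreasing on [0,1/2] and nonincreasing on [1/2,1], and define φ : [0,1] → ℝ by φ(z) = (1 − 2g(z))·z + g(z). Then φ is strictly increasing: for all x, y ∈ [0,1], x < y implies φ(x) < φ(y). Consequently, under symmetric probabilistically transformed noise with η̄ = φ ∘ η, the corrupted class-probability function η̄ is order preserving for η. -/
/-!
Write `φ z = z + g z (1 - 2z)`. For `x < y` the increment splits in two ways,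
`φ y - φ x = (1 - 2 g y)(y - x) + (g y - g x)(1 - 2x)
           = (1 - 2 g x)(y - x) + (g y - g x)(1 - 2y)`,
whose first terms are positive since `g < 1/2`. Unimodality of `g` about `1/2` guarantees
that for one of the two the second term is nonnegative: either `x ≤ 1/2` and `g x ≤ g y`,
or `1/2 ≤ y` and `g y ≤ g x`.
-/

open Set

lemma flip_mix_lt_of_le_half {a b x y : ℝ} (hxy : x < y) (hx : x ≤ 1 / 2) (hab : a ≤ b)
    (hb : b < 1 / 2) : (1 - 2 * a) * x + a < (1 - 2 * b) * y + b := by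
  have hsplit : (1 - 2 * b) * y + b - ((1 - 2 * a) * x + a) =
      (1 - 2 * b) * (y - x) + (b - a) * (1 - 2 * x) := by ring
  have hpos : 0 < (1 - 2 * b) * (y - x) := mul_pos (by linarith) (by linarith)
  have hnonneg : 0 ≤ (b - a) * (1 - 2 * x) := mul_nonneg (by linarith) (by linarith)
  linarith

lemma flip_mix_lt_of_half_le {a b x y : ℝ} (hxy : x < y) (hy : 1 / 2 ≤ y) (hba : b ≤ a)
    (ha : a < 1 / 2) : (1 - 2 * a) * x + a < (1 - 2 * b) * y + b := by
  have hsplit : (1 - 2 * b) * y + b - ((1 - 2 * a) * x + a) =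
      (1 - 2 * a) * (y - x) + (a - b) * (2 * y - 1) := by ring
  have hpos : 0 < (1 - 2 * a) * (y - x) := mul_pos (by linarith) (by linarith)
  have hnonneg : 0 ≤ (a - b) * (2 * y - 1) := mul_nonneg (by linarith) (by linarith)
  linarith

lemma le_half_and_le_or_half_le_and_le_of_unimodal {g : ℝ → ℝ}
    (hg_incr : ∀ z z' : ℝ, 0 ≤ z → z ≤ z' → z' ≤ 1 / 2 → g z ≤ g z')
    (hg_decr : ∀ z z' : ℝ, 1 / 2 ≤ z → z ≤ z' → z' ≤ 1 → g z' ≤ g z)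
    {x y : ℝ} (hx : 0 ≤ x) (hy : y ≤ 1) (hxy : x ≤ y) :
    (x ≤ 1 / 2 ∧ g x ≤ g y) ∨ (1 / 2 ≤ y ∧ g y ≤ g x) := by
  rcases le_or_gt y (1 / 2) with hy_left | hy_right
  · exact .inl ⟨hxy.trans hy_left, hg_incr x y hx hxy hy_left⟩
  rcases le_or_gt (1 / 2) x with hx_right | hx_left
  · exact .inr ⟨hy_right.le, hg_decr x y hx_right hxy hy⟩
  rcases le_total (g x) (g y) with hle | hge
  · exact .inl ⟨hx_left.le, hle⟩
  · exact .inr ⟨hy_right.le, hge⟩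

lemma strictMonoOn_flip_mix {g : ℝ → ℝ}
    (hghalf : ∀ z ∈ Icc (0 : ℝ) 1, g z < 1 / 2)
    (hg_incr : ∀ z z' : ℝ, 0 ≤ z → z ≤ z' → z' ≤ 1 / 2 → g z ≤ g z')
    (hg_decr : ∀ z z' : ℝ, 1 / 2 ≤ z → z ≤ z' → z' ≤ 1 → g z' ≤ g z) :
    StrictMonoOn (fun z ↦ (1 - 2 * g z) * z + g z) (Icc 0 1) := by
  intro x hx y hy hxy
  rcases le_half_and_le_or_half_le_and_le_of_unimodal hg_incr hg_decr hx.1 hy.2 hxy.le with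
    ⟨hx_left, hle⟩ | ⟨hy_right, hge⟩
  · exact flip_mix_lt_of_le_half hxy hx_left hle (hghalf y hy)
  · exact flip_mix_lt_of_half_le hxy hy_right hge (hghalf x hx)

theorem ptn_phi_strictly_increasing_general
    (g : ℝ → ℝ)
    (hghalf : ∀ z ∈ Set.Icc (0 : ℝ) 1, g z < 1 / 2)
    (hg_incr : ∀ z z' : ℝ, 0 ≤ z → z ≤ z' → z' ≤ 1 / 2 → g z ≤ g z')
    (hg_decr : ∀ z z' : ℝ, 1 / 2 ≤ z → z ≤ z' → z' ≤ 1 → g z' ≤ g z)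
    (φ : ℝ → ℝ) (hφ : ∀ z, φ z = (1 - 2 * g z) * z + g z) :
    (∀ x y : ℝ, x ∈ Set.Icc (0 : ℝ) 1 → y ∈ Set.Icc (0 : ℝ) 1 →
      x < y → φ x < φ y) ∧
    ∀ {X : Type} (η : X → ℝ), (∀ x, η x ∈ Set.Icc (0 : ℝ) 1) →
      ∀ (ηbar : X → ℝ), (∀ x, ηbar x = φ (η x)) →
        ∀ x x' : X, η x < η x' → ηbar x < ηbar x' := by
  have hmono : StrictMonoOn φ (Icc 0 1) := by
    rw [funext hφ]
    exact strictMonoOn_flip_mix hghalf hg_incr hg_decr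
  refine ⟨fun x y hx hy hxy ↦ hmono hx hy hxy, ?_⟩
  intro X η hη ηbar hηbar x x' hlt
  rw [hηbar, hηbar]
  exact hmono (hη x) (hη x') hlt

/-- For symmetric probabilistically transformed noise with flip function
`g : [0,1] → [0,1/2)` nondecreasing on `[0,1/2]` and nonincreasing on
`[1/2,1]`, the map `φ(z) = (1 - 2 g z) z + g z` is strictly increasing on
`[0,1]`; consequently the corrupted class-probability function `η̄ = φ ∘ η`
is order preserving for `η`. -/
theorem ptn_phi_strictly_increasing
    (g : ℝ → ℝ)
    (hg0 : ∀ z ∈ Set.Icc (0 : ℝ) 1, 0 ≤ g z)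
    (hghalf : ∀ z ∈ Set.Icc (0 : ℝ) 1, g z < 1 / 2)
    (hg_incr : ∀ z z' : ℝ, 0 ≤ z → z ≤ z' → z' ≤ 1 / 2 → g z ≤ g z')
    (hg_decr : ∀ z z' : ℝ, 1 / 2 ≤ z → z ≤ z' → z' ≤ 1 → g z' ≤ g z)
    (φ : ℝ → ℝ) (hφ : ∀ z, φ z = (1 - 2 * g z) * z + g z) :
    (∀ x y : ℝ, x ∈ Set.Icc (0 : ℝ) 1 → y ∈ Set.Icc (0 : ℝ) 1 →
      x < y → φ x < φ y) ∧
    ∀ {X : Type} (η : X → ℝ), (∀ x, η x ∈ Set.Icc (0 : ℝ) 1) →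
      ∀ (ηbar : X → ℝ), (∀ x, ηbar x = φ (η x)) →
        ∀ x x' : X, η x < η x' → ηbar x < ηbar x' :=
  ptn_phi_strictly_increasing_general g hghalf hg_incr hg_decr φ hφ
end

section
/- Let g : [0,1] → [0,1] be differentiable with g(z) ≤ ρ_max for all z, where ρ_max < 1/2, and suppose g'(z)·(z − 1/2) ≤ 0 for all z ∈ [0,1] (i.e. g is nondecreasing below 1/2 and nonincreasing above 1/2). Define φ(z) = (1 − 2g(z))·z + g(z). Then for all z ∈ [0,1], φ'(z) ≥ 1 − 2ρ_max > 0; in particular φ is strictly increasing on [0,1]. -/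
/-! By the product rule `φ' = 1 - 2 g + g' (1 - 2 z)`. The admissibility condition
`g' (z - 1/2) ≤ 0` makes the second summand nonnegative, so `φ' ≥ 1 - 2 g ≥ 1 - 2 ρ_max > 0`,
and a positive derivative on the convex set `[0,1]` gives strict monotonicity. -/

theorem hasDerivAt_symmetric_flip_link {g : ℝ → ℝ} {g' z : ℝ} (hg : HasDerivAt g g' z) :
    HasDerivAt (fun z => (1 - 2 * g z) * z + g z) (1 - 2 * g z + g' * (1 - 2 * z)) z := by
  refine ((((hg.const_mul 2).const_sub 1).mul (hasDerivAt_id' z)).add hg).congr_deriv ?_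
  ring

theorem one_sub_two_mul_le_symmetric_flip_link_deriv {gz g' z ρ : ℝ} (hgρ : gz ≤ ρ)
    (hadm : g' * (z - 1 / 2) ≤ 0) : 1 - 2 * ρ ≤ 1 - 2 * gz + g' * (1 - 2 * z) := by
  have : g' * (1 - 2 * z) = -2 * (g' * (z - 1 / 2)) := by ring
  linarith

theorem ptn_phi_derivative_bound_general
    (g g' : ℝ → ℝ)
    (ρmax : ℝ) (hgρ : ∀ z ∈ Set.Icc (0 : ℝ) 1, g z ≤ ρmax) (hρ : ρmax < 1 / 2)
    (hgd : ∀ z ∈ Set.Icc (0 : ℝ) 1, HasDerivAt g (g' z) z)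
    (hadm : ∀ z ∈ Set.Icc (0 : ℝ) 1, g' z * (z - 1 / 2) ≤ 0)
    (φ : ℝ → ℝ) (hφ : ∀ z, φ z = (1 - 2 * g z) * z + g z) :
    (∀ z ∈ Set.Icc (0 : ℝ) 1,
      HasDerivAt φ (1 - 2 * g z + g' z * (1 - 2 * z)) z ∧
      1 - 2 * ρmax ≤ 1 - 2 * g z + g' z * (1 - 2 * z)) ∧
    (0 < 1 - 2 * ρmax) ∧
    StrictMonoOn φ (Set.Icc (0 : ℝ) 1) := by
  obtain rfl : φ = fun z => (1 - 2 * g z) * z + g z := funext hφ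
  have hderiv z (hz : z ∈ Set.Icc (0 : ℝ) 1) :=
    hasDerivAt_symmetric_flip_link (hgd z hz)
  have hbound z (hz : z ∈ Set.Icc (0 : ℝ) 1) :=
    one_sub_two_mul_le_symmetric_flip_link_deriv (hgρ z hz) (hadm z hz)
  have hpos : 0 < 1 - 2 * ρmax := by linarith
  refine ⟨fun z hz => ⟨hderiv z hz, hbound z hz⟩, hpos, ?_⟩
  refine strictMonoOn_of_hasDerivWithinAt_pos (convex_Icc 0 1)
    (fun z hz => (hderiv z hz).continuousAt.continuousWithinAt)
    (fun z hz => (hderiv z (interior_subset hz)).hasDerivWithinAt) fun z hz => ?_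
  exact hpos.trans_le (hbound z (interior_subset hz))

/-- For symmetric PTN noise with differentiable flip function `g` bounded by
`ρ_max < 1/2` and satisfying `g'(z)·(z - 1/2) ≤ 0` on `[0,1]`, the corrupted
link `φ(z) = (1 - 2 g z) z + g z` has derivative at least `1 - 2 ρ_max > 0`
on `[0,1]`, and in particular is strictly increasing on `[0,1]`. -/
theorem ptn_phi_derivative_bound
    (g g' : ℝ → ℝ)
    (hg01 : ∀ z ∈ Set.Icc (0 : ℝ) 1, g z ∈ Set.Icc (0 : ℝ) 1)
    (ρmax : ℝ) (hgρ : ∀ z ∈ Set.Icc (0 : ℝ) 1, g z ≤ ρmax) (hρ : ρmax < 1 / 2)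
    (hgd : ∀ z ∈ Set.Icc (0 : ℝ) 1, HasDerivAt g (g' z) z)
    (hadm : ∀ z ∈ Set.Icc (0 : ℝ) 1, g' z * (z - 1 / 2) ≤ 0)
    (φ : ℝ → ℝ) (hφ : ∀ z, φ z = (1 - 2 * g z) * z + g z) :
    (∀ z ∈ Set.Icc (0 : ℝ) 1,
      HasDerivAt φ (1 - 2 * g z + g' z * (1 - 2 * z)) z ∧
      1 - 2 * ρmax ≤ 1 - 2 * g z + g' z * (1 - 2 * z)) ∧
    (0 < 1 - 2 * ρmax) ∧
    StrictMonoOn φ (Set.Icc (0 : ℝ) 1) :=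
  ptn_phi_derivative_bound_general g g' ρmax hgρ hρ hgd hadm φ hφ
end
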